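/- arXiv:2507.13583 — 2 statements merged into one kernel-verified Lean document; each statement's English description precedes it below -/
import Mathlib

section
/- Let 0 < φ < π, λ ∈ ℂ, and define P_n^{(λ)}(x;φ) = e^{inφ} Σ_{k=0}^{n} (λ+ix)_k (λ−ix)_{n−k} e^{−2ikφ} / (k! (n−k)!). Let T be the central difference operator (Tf)(x) = (f(x+i/2) − f(x−i/2))/i. Then for n ≥ 1 and all complex x, T[P_n^{(λ)}(·;φ)](x) = 2 sin φ · P_{n−1}^{(λ+1/2)}(x;φ). -/
open Complex Finset

/-- The Pochhammer symbol (rising factorial) on ℂ. -/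
def poch (a : ℂ) : ℕ → ℂ
  | 0 => 1
  | k + 1 => poch a k * (a + k)

/-- The Meixner–Pollaczek polynomial, as a finite sum. -/
noncomputable def MP (l : ℂ) (φ : ℝ) (n : ℕ) (x : ℂ) : ℂ :=
  Complex.exp (I * n * φ) * ∑ k ∈ range (n + 1),
    poch (l + I * x) k * poch (l - I * x) (n - k) * Complex.exp (-2 * I * k * φ) /
      (Nat.factorial k * Nat.factorial (n - k))

/-- The central difference operator. -/
noncomputable def T (f : ℂ → ℂ) (x : ℂ) : ℂ := (f (x + I / 2) - f (x - I / 2)) / I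

/-!
With `q = e^{-2iφ}`, the sum defining `P_n^{(λ)}(x;φ)` is the coefficient of `tⁿ` in
`(1 - qt)^{-(λ+ix)} (1 - t)^{-(λ-ix)}`, a product of two series `∑ₖ (a)ₖ (qt)ᵏ / k!`.
Shifting `x` by `±i/2` lowers one of the two exponents `λ + 1/2 ± ix` by one, which multiplies
that factor by `1 - qt` resp. `1 - t`. The difference of the two shifted products is therefore
`(1 - q) t` times the product for `λ + 1/2`, and
`e^{inφ} (1 - e^{-2iφ}) / i = 2 sin φ · e^{i(n-1)φ}`.
-/

open PowerSeries

lemma poch_succ (a : ℂ) (k : ℕ) : poch a (k + 1) = poch a k * (a + k) := rfl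

lemma poch_sub_one_succ (a : ℂ) (k : ℕ) : poch (a - 1) (k + 1) = (a - 1) * poch a k := by
  induction k with
  | zero => simp [poch]
  | succ k ih =>
    rw [poch_succ, ih, poch_succ]
    push_cast
    ring

lemma poch_sub_one_succ_div_factorial (a : ℂ) (k : ℕ) :
    poch (a - 1) (k + 1) / (k + 1).factorial
      = poch a (k + 1) / (k + 1).factorial - poch a k / k.factorial := by
  rw [poch_sub_one_succ, poch_succ, Nat.factorial_succ]
  push_cast
  field_simp
  ring

noncomputable def pochSeries (a q : ℂ) : PowerSeries ℂ :=
  PowerSeries.mk fun k => poch a k / k.factorial * q ^ k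

lemma pochSeries_sub_one (a q : ℂ) :
    pochSeries (a - 1) q = (1 - C q * X) * pochSeries a q := by
  ext (_ | k)
  · simp [pochSeries, poch]
  · simp only [pochSeries, coeff_mk, sub_mul, one_mul, map_sub, mul_assoc, coeff_C_mul,
      coeff_succ_X_mul, poch_sub_one_succ_div_factorial, pow_succ]
    ring

lemma coeff_succ_pochSeries_mul_sub (a b q : ℂ) (m : ℕ) :
    coeff (m + 1) (pochSeries (a - 1) q * pochSeries b 1)
        - coeff (m + 1) (pochSeries a q * pochSeries (b - 1) 1)
      = (1 - q) * coeff m (pochSeries a q * pochSeries b 1) := by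
  rw [pochSeries_sub_one, pochSeries_sub_one, ← map_sub,
    show (1 - C q * X) * pochSeries a q * pochSeries b 1
        - pochSeries a q * ((1 - C 1 * X) * pochSeries b 1)
      = X * (C (1 - q) * (pochSeries a q * pochSeries b 1)) by
        simp only [map_sub, map_one]; ring,
    coeff_succ_X_mul, coeff_C_mul]

lemma MP_eq_exp_mul_coeff (l : ℂ) (φ : ℝ) (n : ℕ) (x : ℂ) :
    MP l φ n x = cexp (I * n * φ) *
      coeff n (pochSeries (l + I * x) (cexp (-2 * I * φ)) * pochSeries (l - I * x) 1) := by
  rw [MP, coeff_mul, Finset.Nat.sum_antidiagonal_eq_sum_range_succ_mk]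
  congr 1
  refine sum_congr rfl fun k _ => ?_
  rw [pochSeries, pochSeries, coeff_mk, coeff_mk, one_pow, mul_one, ← Complex.exp_nat_mul]
  ring_nf

lemma exp_mul_one_sub_exp_div_I (z : ℂ) (m : ℕ) :
    cexp (I * (m + 1 : ℕ) * z) / I * (1 - cexp (-2 * I * z)) = 2 * sin z * cexp (I * m * z) := by
  have hinv : cexp (z * I) * cexp (-z * I) = 1 := by rw [← Complex.exp_add]; simp
  rw [div_mul_eq_mul_div, div_eq_iff I_ne_zero, Complex.sin,
    show I * ((m + 1 : ℕ) : ℂ) * z = I * m * z + z * I by push_cast; ring,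
    show -2 * I * z = -z * I + -z * I by ring, Complex.exp_add, Complex.exp_add]
  linear_combination (cexp (z * I) - cexp (-z * I)) * cexp (I * m * z) * I_mul_I
    - cexp (I * m * z) * cexp (-z * I) * hinv

theorem T_MP_general (l : ℂ) (φ : ℝ) (n : ℕ) (hn : 1 ≤ n) (x : ℂ) :
    T (fun y => MP l φ n y) x = 2 * Real.sin φ * MP (l + 1 / 2) φ (n - 1) x := by
  obtain ⟨m, rfl⟩ : ∃ m, n = m + 1 := ⟨n - 1, by omega⟩
  have h1 : l + I * (x + I / 2) = l + 1 / 2 + I * x - 1 := by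
    linear_combination (1 / 2 : ℂ) * I_mul_I
  have h2 : l - I * (x + I / 2) = l + 1 / 2 - I * x := by
    linear_combination (-(1 / 2) : ℂ) * I_mul_I
  have h3 : l + I * (x - I / 2) = l + 1 / 2 + I * x := by
    linear_combination (-(1 / 2) : ℂ) * I_mul_I
  have h4 : l - I * (x - I / 2) = l + 1 / 2 - I * x - 1 := by
    linear_combination (1 / 2 : ℂ) * I_mul_I
  rw [T, MP_eq_exp_mul_coeff, MP_eq_exp_mul_coeff, MP_eq_exp_mul_coeff, h1, h2, h3, h4,
    ← mul_sub, coeff_succ_pochSeries_mul_sub, Nat.add_sub_cancel, ofReal_sin]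
  linear_combination coeff m (pochSeries (l + 1 / 2 + I * x) (cexp (-2 * I * φ)) *
    pochSeries (l + 1 / 2 - I * x) 1) * exp_mul_one_sub_exp_div_I φ m

theorem T_MP (l : ℂ) (φ : ℝ) (hφ : 0 < φ ∧ φ < Real.pi) (n : ℕ) (hn : 1 ≤ n) (x : ℂ) :
    T (fun y => MP l φ n y) x = 2 * Real.sin φ * MP (l + 1 / 2) φ (n - 1) x :=
  T_MP_general l φ n hn x
end

section
/- Let 0 < φ < π, λ ∈ ℂ, and define P_n^{(λ)}(x;φ) via the finite sum P_n^{(λ)}(x;φ) = e^{inφ} Σ_{k=0}^{n} (λ+ix)_k (λ−ix)_{n−k} e^{−2ikφ} / (k! (n−k)!). Then for complex t with |t| < 1 and real x, Σ_{n=0}^∞ P_n^{(λ)}(x;φ) t^n = (1 − t e^{iφ})^{−(λ−ix)} (1 − t e^{−iφ})^{−(λ+ix)}, where the complex powers use the principal branch of (1 − w)^{−a} for |w| < 1. -/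
/-!
With `w = t e^{-iφ}` and `z = t e^{iφ}`, the identity `e^{inφ} e^{-2ikφ} = w^k z^(n-k) / t^n`
makes `MP l φ n x * t ^ n` the `n`-th Cauchy-product coefficient of the binomial series
`∑ (l + ix)_k w^k / k! = (1 - w)^{-(l+ix)}` and `∑ (l - ix)_k z^k / k! = (1 - z)^{-(l-ix)}`.
Both converge absolutely because `|w| = |z| = |t| < 1`. Since `(a)_k / k! = Ring.multichoose a k`,
they are Mathlib's binomial series for `1 / (1 - w)^a`.
-/

open Complex Finset

lemma poch_eq_ascPochhammer_eval (a : ℂ) (k : ℕ) : poch a k = (ascPochhammer ℂ k).eval a := by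
  induction k with
  | zero => simp [poch]
  | succ k ih => rw [poch, ih, ascPochhammer_succ_eval]

lemma poch_div_factorial_eq_multichoose (a : ℂ) (k : ℕ) :
    poch a k / k.factorial = Ring.multichoose a k := by
  rw [div_eq_iff (Nat.cast_ne_zero.mpr k.factorial_ne_zero), poch_eq_ascPochhammer_eval,
    ← Polynomial.ascPochhammer_smeval_eq_eval, ← Ring.factorial_nsmul_multichoose_eq_ascPochhammer,
    nsmul_eq_mul, mul_comm]

lemma hasFPowerSeriesOnBall_one_sub_cpow_neg (a : ℂ) :
    HasFPowerSeriesOnBall (fun w : ℂ => (1 - w) ^ (-a))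
      (.ofScalars ℂ fun k => poch a k / k.factorial) 0 1 := by
  simpa [cpow_neg, poch_div_factorial_eq_multichoose, Ring.multichoose_eq] using
    one_div_one_sub_cpow_hasFPowerSeriesOnBall_zero a

lemma mem_eball_one_of_norm_lt_one {E : Type*} [SeminormedAddCommGroup E] {w : E}
    (hw : ‖w‖ < 1) : w ∈ Metric.eball (0 : E) 1 := by
  rw [← ENNReal.ofReal_one, Metric.eball_ofReal]
  simpa using hw

lemma hasSum_poch_div_factorial_mul_pow (a : ℂ) {w : ℂ} (hw : ‖w‖ < 1) :
    HasSum (fun k => poch a k / k.factorial * w ^ k) ((1 - w) ^ (-a)) := by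
  simpa only [FormalMultilinearSeries.ofScalars_apply_eq, smul_eq_mul, zero_add] using
    (hasFPowerSeriesOnBall_one_sub_cpow_neg a).hasSum (mem_eball_one_of_norm_lt_one hw)

lemma summable_norm_poch_div_factorial_mul_pow (a : ℂ) {w : ℂ} (hw : ‖w‖ < 1) :
    Summable (fun k => ‖poch a k / k.factorial * w ^ k‖) := by
  have hf := hasFPowerSeriesOnBall_one_sub_cpow_neg a
  simpa only [FormalMultilinearSeries.ofScalars_apply_eq, smul_eq_mul] using
    FormalMultilinearSeries.summable_norm_apply _
      (Metric.eball_subset_eball hf.r_le (mem_eball_one_of_norm_lt_one hw))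

lemma hasSum_one_sub_cpow_neg_mul_one_sub_cpow_neg (a b : ℂ) {w z : ℂ} (hw : ‖w‖ < 1)
    (hz : ‖z‖ < 1) :
    HasSum (fun n => ∑ k ∈ range (n + 1),
        poch a k / k.factorial * w ^ k * (poch b (n - k) / (n - k).factorial * z ^ (n - k)))
      ((1 - w) ^ (-a) * (1 - z) ^ (-b)) := by
  have key := hasSum_sum_range_mul_of_summable_norm
    (summable_norm_poch_div_factorial_mul_pow a hw) (summable_norm_poch_div_factorial_mul_pow b hz)
  rwa [(hasSum_poch_div_factorial_mul_pow a hw).tsum_eq,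
    (hasSum_poch_div_factorial_mul_pow b hz).tsum_eq] at key

lemma MP_mul_pow_eq_sum (l : ℂ) (φ : ℝ) (n : ℕ) (x t : ℂ) :
    MP l φ n x * t ^ n = ∑ k ∈ range (n + 1),
      poch (l + I * x) k / k.factorial * (t * exp (-(I * φ))) ^ k *
        (poch (l - I * x) (n - k) / (n - k).factorial * (t * exp (I * φ)) ^ (n - k)) := by
  rw [MP, mul_sum, sum_mul]
  refine sum_congr rfl fun k hk => ?_
  have hkn : k ≤ n := Nat.lt_succ_iff.mp (mem_range.mp hk)
  have hexp : exp (I * n * φ) * exp (-2 * I * k * φ) =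
      exp (-(I * φ)) ^ k * exp (I * φ) ^ (n - k) := by
    rw [← exp_nat_mul, ← exp_nat_mul, ← exp_add, ← exp_add, Nat.cast_sub hkn]
    ring_nf
  have hpow : t ^ n = t ^ k * t ^ (n - k) := by rw [← pow_add, Nat.add_sub_cancel' hkn]
  rw [hpow, mul_pow, mul_pow]
  linear_combination (poch (l + I * x) k * poch (l - I * x) (n - k) /
    (k.factorial * (n - k).factorial) * t ^ k * t ^ (n - k)) * hexp

theorem MP_generating_function_general (l : ℂ) (φ : ℝ)
    (x : ℝ) (t : ℂ) (ht : ‖t‖ < 1) :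
    HasSum (fun n : ℕ => MP l φ n (x : ℂ) * t ^ n)
      ((1 - t * Complex.exp (I * φ)) ^ (-(l - I * x)) *
        (1 - t * Complex.exp (-(I * φ))) ^ (-(l + I * x))) := by
  have hnorm (s : ℝ) : ‖t * exp (s * I)‖ < 1 := by
    rwa [norm_mul, norm_exp_ofReal_mul_I, mul_one]
  have hw : ‖t * exp (-(I * φ))‖ < 1 := by simpa [mul_comm I] using hnorm (-φ)
  have hz : ‖t * exp (I * φ)‖ < 1 := by simpa [mul_comm I] using hnorm φ
  rw [mul_comm ((1 - t * exp (I * φ)) ^ _)]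
  simpa only [← MP_mul_pow_eq_sum] using
    hasSum_one_sub_cpow_neg_mul_one_sub_cpow_neg (l + I * x) (l - I * x) hw hz

theorem MP_generating_function (l : ℂ) (φ : ℝ) (hφ : 0 < φ ∧ φ < Real.pi)
    (x : ℝ) (t : ℂ) (ht : ‖t‖ < 1) :
    HasSum (fun n : ℕ => MP l φ n (x : ℂ) * t ^ n)
      ((1 - t * Complex.exp (I * φ)) ^ (-(l - I * x)) *
        (1 - t * Complex.exp (-(I * φ))) ^ (-(l + I * x))) :=
  MP_generating_function_general l φ x t ht
end
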